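/- arXiv:1212.1988 — 3 statements merged into one kernel-verified Lean document; each statement's English description precedes it below -/
import Mathlib

section
/- Let 2 < p < 3, K ≥ 1, and define γ_K(t) = |t|^{p-2} if |t| ≤ K and γ_K(t) = K^{p-2} if |t| > K. Then for all real s, t: |s·γ_K(s) − t·γ_K(t)| ≤ 3(γ_K(s) + γ_K(t))·|s − t|. -/
lemma key_rpow (α : ℝ) (hα0 : 0 ≤ α) (hα1 : α ≤ 1) (a b : ℝ) (hb : 0 ≤ b)
    (hab : b ≤ a) : b * a ^ α ≤ b ^ α * a := by
  rcases eq_or_lt_of_le hb with h0 | hb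
  · subst h0
    rw [zero_mul]
    exact mul_nonneg (Real.rpow_nonneg le_rfl α) hab
  · have ha : 0 < a := lt_of_lt_of_le hb hab
    have h1 : b = b ^ α * b ^ (1 - α) := by
      rw [← Real.rpow_add hb, add_sub_cancel, Real.rpow_one]
    calc b * a ^ α = b ^ α * (b ^ (1 - α) * a ^ α) := by rw [← mul_assoc, ← h1]
      _ ≤ b ^ α * (a ^ (1 - α) * a ^ α) := by
          apply mul_le_mul_of_nonneg_left _ (Real.rpow_nonneg hb.le α)
          exact mul_le_mul_of_nonneg_right
            (Real.rpow_le_rpow hb.le hab (by linarith)) (Real.rpow_nonneg ha.le α)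
      _ = b ^ α * a := by rw [← Real.rpow_add ha, sub_add_cancel, Real.rpow_one]

theorem stmt0 (p K : ℝ) (hp1 : 2 < p) (hp2 : p < 3) (hK : 1 ≤ K)
    (γ : ℝ → ℝ)
    (hγ : ∀ t, γ t = if |t| ≤ K then |t| ^ (p - 2) else K ^ (p - 2))
    (s t : ℝ) :
    |s * γ s - t * γ t| ≤ 3 * (γ s + γ t) * |s - t| := by
  wlog h : |t| ≤ |s| with H
  · have := H p K hp1 hp2 hK γ hγ t s (le_of_not_ge h)
    calc |s * γ s - t * γ t| = |t * γ t - s * γ s| := abs_sub_comm _ _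
      _ ≤ 3 * (γ t + γ s) * |t - s| := this
      _ = 3 * (γ s + γ t) * |s - t| := by rw [add_comm, abs_sub_comm]
  set α := p - 2 with hα
  have hα0 : (0:ℝ) ≤ α := by linarith
  have hα1 : α ≤ 1 := by linarith
  have hK0 : (0:ℝ) ≤ K := by linarith
  have hγnn : ∀ x, 0 ≤ γ x := by
    intro x
    rw [hγ x]
    split
    · exact Real.rpow_nonneg (abs_nonneg x) α
    · exact Real.rpow_nonneg hK0 α
  have hmono : ∀ x y : ℝ, |y| ≤ |x| → γ y ≤ γ x := by
    intro x y hxy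
    rw [hγ x, hγ y]
    by_cases hx : |x| ≤ K
    · rw [if_pos hx, if_pos (hxy.trans hx)]
      exact Real.rpow_le_rpow (abs_nonneg y) hxy hα0
    · rw [if_neg hx]
      split
      · exact Real.rpow_le_rpow (abs_nonneg y) (by assumption) hα0
      · exact le_rfl
  -- key bound: |t| * (γ s - γ t) ≤ γ t * |s - t|
  have hst : γ t ≤ γ s := hmono s t h
  have habs : |s| - |t| ≤ |s - t| := by
    have := abs_sub_abs_le_abs_sub s t
    linarith
  have hkey : |t| * (γ s - γ t) ≤ γ t * |s - t| := by
    by_cases hs : |s| ≤ K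
    · have ht : |t| ≤ K := h.trans hs
      rw [hγ s, hγ t, if_pos hs, if_pos ht]
      have := key_rpow α hα0 hα1 |s| |t| (abs_nonneg t) h
      have h2 : |t| * |t| ^ α = |t| ^ α * |t| := mul_comm _ _
      nlinarith [Real.rpow_nonneg (abs_nonneg t) α, abs_nonneg t]
    · push_neg at hs
      by_cases ht : |t| ≤ K
      · rw [hγ s, hγ t, if_neg (not_le.mpr hs), if_pos ht]
        have hk := key_rpow α hα0 hα1 K |t| (abs_nonneg t) ht
        have h3 : K - |t| ≤ |s - t| := by linarith
        nlinarith [Real.rpow_nonneg (abs_nonneg t) α, abs_nonneg t]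
      · rw [hγ s, hγ t, if_neg (not_le.mpr hs), if_neg ht]
        simp only [sub_self, mul_zero]
        exact mul_nonneg (Real.rpow_nonneg hK0 α) (abs_nonneg _)
  have hdecomp : s * γ s - t * γ t = (s - t) * γ s + t * (γ s - γ t) := by ring
  calc |s * γ s - t * γ t| ≤ |(s - t) * γ s| + |t * (γ s - γ t)| := by
        rw [hdecomp]; exact abs_add_le _ _
    _ = γ s * |s - t| + |t| * (γ s - γ t) := by
        rw [abs_mul, abs_mul, abs_of_nonneg (hγnn s), abs_of_nonneg (by linarith : (0:ℝ) ≤ γ s - γ t), mul_comm]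
    _ ≤ γ s * |s - t| + γ t * |s - t| := by linarith
    _ ≤ 3 * (γ s + γ t) * |s - t| := by
        nlinarith [abs_nonneg (s - t), hγnn s, hγnn t]
end

section
/- Let (𝕋, μ) be a probability space, 2 < p < 3, K ≥ 1, and f measurable with ‖f‖_{Γ_K} = 1. Define f₁ = f·1_{\{|f/2| < K\}} and f₂ = f·1_{\{|f/2| ≥ K\}}. Then ‖f₁‖_{L^p} ≤ 2 and ‖f₂‖_{L²}² ≤ 4·K^{2−p}. -/
/-!
`Γ_K` grows quadratically, so `Γ_K(f/λ)` is integrable for one `λ > 0` iff `f ∈ L²`, iff it is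
integrable for every `λ > 0`. If `f ∉ L²`, every Bochner integral in the Luxemburg set is the junk
value `0`, the set is `(0, ∞)` and its infimum is `0`, not `1`. Hence `f ∈ L²`, and since
`Γ_K(t)` increases with `|t|`, a norm of `1` gives `∫ Γ_K(f/2) ≤ 1`. On `{|f/2| < K}` we have
`Γ_K(f/2) = |f/2|^p`, and on `{|f/2| ≥ K}` the bound `Γ_K(t) ≥ K^(p-2) t²` holds, which give the
`L^p` and the `L²` estimates respectively.
-/

open MeasureTheory

noncomputable def gammaK (p K t : ℝ) : ℝ :=
  if |t| ≤ K then |t| ^ p else (1 + (p - 2) / 2) * K ^ (p - 2) * t ^ 2 - (p - 2) / 2 * K ^ p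

namespace gammaK

variable {p K s t : ℝ}

lemma of_abs_le (h : |t| ≤ K) : gammaK p K t = |t| ^ p := if_pos h

lemma of_lt_abs (h : K < |t|) :
    gammaK p K t = (1 + (p - 2) / 2) * K ^ (p - 2) * t ^ 2 - (p - 2) / 2 * K ^ p :=
  if_neg h.not_ge

lemma rpow_sub_two_mul_sq (hK : 0 < K) : K ^ (p - 2) * K ^ 2 = K ^ p := by
  rw [← Real.rpow_natCast K 2, ← Real.rpow_add hK]
  norm_num

lemma rpow_le_of_lt_abs (hp : 0 ≤ p) (hK : 0 < K) (h : K < |t|) : K ^ p ≤ gammaK p K t := by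
  have hsq : K ^ 2 ≤ t ^ 2 := sq_le_sq.mpr (by rw [abs_of_pos hK]; exact h.le)
  have hKK := rpow_sub_two_mul_sq (p := p) hK
  rw [of_lt_abs h]
  nlinarith [mul_le_mul_of_nonneg_left hsq (Real.rpow_pos_of_pos hK (p - 2)).le]

lemma mono (hp : 0 ≤ p) (hK : 0 < K) (h : |s| ≤ |t|) : gammaK p K s ≤ gammaK p K t := by
  rcases le_or_gt |t| K with ht | ht
  · rw [of_abs_le ht, of_abs_le (h.trans ht)]
    gcongr
  rcases le_or_gt |s| K with hs | hs
  · calc gammaK p K s = |s| ^ p := of_abs_le hs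
      _ ≤ K ^ p := by gcongr
      _ ≤ gammaK p K t := rpow_le_of_lt_abs hp hK ht
  · have hsq : s ^ 2 ≤ t ^ 2 := sq_le_sq.mpr h
    rw [of_lt_abs hs, of_lt_abs ht]
    gcongr
    exact mul_nonneg (by linarith) (Real.rpow_nonneg hK.le _)

lemma nonneg (hp : 0 < p) (hK : 0 < K) (t : ℝ) : 0 ≤ gammaK p K t := by
  have h0 : gammaK p K 0 = 0 := by
    rw [of_abs_le (by simpa using hK.le), abs_zero, Real.zero_rpow hp.ne']
  simpa [h0] using mono hp.le hK (by simp : |(0 : ℝ)| ≤ |t|)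

lemma abs_sub_sq_le (hp : 0 ≤ p) (hK : 0 < K) (t : ℝ) :
    |gammaK p K t - p / 2 * K ^ (p - 2) * t ^ 2| ≤ (1 + p / 2) * K ^ p := by
  have hKp : 0 < K ^ p := Real.rpow_pos_of_pos hK p
  have hKp2 : 0 < K ^ (p - 2) := Real.rpow_pos_of_pos hK (p - 2)
  have hKK := rpow_sub_two_mul_sq (p := p) hK
  rw [abs_le]
  rcases le_or_gt |t| K with ht | ht
  · have hsq : t ^ 2 ≤ K ^ 2 := sq_le_sq.mpr (by rwa [abs_of_pos hK])
    have htp : |t| ^ p ≤ K ^ p := by gcongr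
    have := Real.rpow_nonneg (abs_nonneg t) p
    rw [of_abs_le ht]
    constructor <;> nlinarith [mul_le_mul_of_nonneg_left hsq hKp2.le,
      mul_nonneg (mul_nonneg hp hKp2.le) (sq_nonneg t)]
  · rw [of_lt_abs ht]
    constructor <;> cases abs_cases (p - 2) <;> nlinarith

lemma rpow_sub_two_mul_sq_le (hp : 2 ≤ p) (hK : 0 < K) (h : K ≤ |t|) :
    K ^ (p - 2) * t ^ 2 ≤ gammaK p K t := by
  have hsq : K ^ 2 ≤ t ^ 2 := sq_le_sq.mpr (by rwa [abs_of_pos hK])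
  have hKK := rpow_sub_two_mul_sq (p := p) hK
  rcases h.eq_or_lt with heq | hlt
  · rw [of_abs_le heq.ge, ← heq, ← sq_abs, ← heq, hKK]
  · rw [of_lt_abs hlt]
    nlinarith [mul_le_mul_of_nonneg_left hsq (Real.rpow_pos_of_pos hK (p - 2)).le]

lemma measurable (p K : ℝ) : Measurable (gammaK p K) :=
  Measurable.ite (measurableSet_le measurable_abs measurable_const) (by fun_prop) (by fun_prop)

lemma abs_ite_rpow_le (hp : 0 < p) (hK : 0 < K) {c : ℝ} (hc : 0 < c) (t : ℝ) :
    |if |t / c| < K then t else 0| ^ p ≤ c ^ p * gammaK p K (t / c) := by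
  split_ifs with h
  · have habs : |t| = c * |t / c| := by
      rw [abs_div, abs_of_pos hc]
      field_simp
    rw [of_abs_le h.le, habs, Real.mul_rpow hc.le (abs_nonneg _)]
  · rw [abs_zero, Real.zero_rpow hp.ne']
    exact mul_nonneg (Real.rpow_nonneg hc.le p) (nonneg hp hK _)

lemma ite_sq_le (hp : 2 ≤ p) (hK : 0 < K) {c : ℝ} (hc : c ≠ 0) (t : ℝ) :
    (if K ≤ |t / c| then t else 0) ^ 2 ≤ c ^ 2 * K ^ (2 - p) * gammaK p K (t / c) := by
  split_ifs with h
  · have hKinv : K ^ (2 - p) * K ^ (p - 2) = 1 := by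
      rw [← Real.rpow_add hK]; norm_num
    calc t ^ 2 = c ^ 2 * (K ^ (2 - p) * K ^ (p - 2)) * (t / c) ^ 2 := by
          rw [hKinv]
          field_simp
      _ = c ^ 2 * K ^ (2 - p) * (K ^ (p - 2) * (t / c) ^ 2) := by ring
      _ ≤ c ^ 2 * K ^ (2 - p) * gammaK p K (t / c) := by
          gcongr
          exact rpow_sub_two_mul_sq_le hp hK h
  · rw [zero_pow two_ne_zero]
    exact mul_nonneg (by positivity) (nonneg (by linarith) hK _)

end gammaK

section Luxemburg

variable {α : Type*} [MeasurableSpace α] {μ : Measure α}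

def luxemburgSet (μ : Measure α) (Φ : ℝ → ℝ) (f : α → ℝ) : Set ℝ :=
  {lam : ℝ | 0 < lam ∧ ∫ x, Φ (f x / lam) ∂μ ≤ 1}

variable {Φ : ℝ → ℝ} {f : α → ℝ}

lemma exists_integrable_comp_div_of_sInf_luxemburgSet_ne_zero
    (h : sInf (luxemburgSet μ Φ f) ≠ 0) : ∃ a, 0 < a ∧ Integrable (fun x => Φ (f x / a)) μ := by
  by_contra! hnot
  have hall : luxemburgSet μ Φ f = Set.Ioi 0 := by
    ext lam
    refine ⟨And.left, fun hlam => ⟨hlam, ?_⟩⟩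
    rw [integral_undef (hnot lam hlam)]
    exact zero_le_one
  exact h (by rw [hall, csInf_Ioi])

lemma integral_comp_div_le_one_of_sInf_luxemburgSet_lt (hΦ : ∀ s t, |s| ≤ |t| → Φ s ≤ Φ t)
    (hint : ∀ a, 0 < a → Integrable (fun x => Φ (f x / a)) μ)
    (hne : (luxemburgSet μ Φ f).Nonempty) {c : ℝ} (hc : sInf (luxemburgSet μ Φ f) < c) :
    ∫ x, Φ (f x / c) ∂μ ≤ 1 := by
  obtain ⟨a, ⟨ha, haS⟩, hac⟩ := exists_lt_of_csInf_lt hne hc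
  have hc0 : 0 < c := ha.trans hac
  calc ∫ x, Φ (f x / c) ∂μ ≤ ∫ x, Φ (f x / a) ∂μ := by
        refine integral_mono (hint c hc0) (hint a ha) fun x => hΦ _ _ ?_
        rw [abs_div, abs_div, abs_of_pos ha, abs_of_pos hc0]
        gcongr
    _ ≤ 1 := haS

lemma integrable_gammaK_comp_div_iff [IsFiniteMeasure μ] {p K a : ℝ} (hp : 0 < p) (hK : 0 < K)
    (ha : a ≠ 0) {g : α → ℝ} (hg : AEStronglyMeasurable g μ) :
    Integrable (fun x => gammaK p K (g x / a)) μ ↔ Integrable (fun x => g x ^ 2) μ := by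
  set c := p / 2 * K ^ (p - 2) / a ^ 2
  have hc : c ≠ 0 := by
    have := Real.rpow_pos_of_pos hK (p - 2)
    positivity
  have hbdd : Integrable (fun x => gammaK p K (g x / a) - c * g x ^ 2) μ := by
    refine Integrable.of_bound ?_ ((1 + p / 2) * K ^ p) (ae_of_all _ fun x => ?_)
    · exact (((gammaK.measurable p K).comp_aemeasurable (hg.aemeasurable.div_const a)).sub
        ((hg.aemeasurable.pow_const 2).const_mul c)).aestronglyMeasurable
    · rw [Real.norm_eq_abs]
      convert gammaK.abs_sub_sq_le hp.le hK (g x / a) using 2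
      simp only [c]
      ring
  rw [← integrable_const_mul_iff (IsUnit.mk0 c hc) (fun x => g x ^ 2),
    ← integrable_add_iff_integrable_left' (g := fun x => c * g x ^ 2) hbdd]
  simp only [add_sub_cancel]

lemma eLpNorm_ofReal_le_of_abs_rpow_le {p c : ℝ} {g h : α → ℝ} (hp : 0 < p) (hc : 0 ≤ c)
    (hgh : ∀ x, |g x| ^ p ≤ h x) (hh : Integrable h μ) (hint : ∫ x, h x ∂μ ≤ c ^ p) :
    eLpNorm g (ENNReal.ofReal p) μ ≤ ENNReal.ofReal c := by
  rw [eLpNorm_eq_lintegral_rpow_enorm_toReal (by simpa using hp) ENNReal.ofReal_ne_top,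
    ENNReal.toReal_ofReal hp.le]
  have hlint : ∫⁻ x, ‖g x‖ₑ ^ p ∂μ ≤ ENNReal.ofReal (c ^ p) :=
    calc ∫⁻ x, ‖g x‖ₑ ^ p ∂μ = ∫⁻ x, ENNReal.ofReal (|g x| ^ p) ∂μ := by
          simp only [Real.enorm_eq_ofReal_abs, ENNReal.ofReal_rpow_of_nonneg (abs_nonneg _) hp.le]
      _ ≤ ∫⁻ x, ENNReal.ofReal (h x) ∂μ := lintegral_mono fun x => ENNReal.ofReal_le_ofReal (hgh x)
      _ = ENNReal.ofReal (∫ x, h x ∂μ) := (ofReal_integral_eq_lintegral_ofReal hh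
          (ae_of_all _ fun x => (Real.rpow_nonneg (abs_nonneg _) p).trans (hgh x))).symm
      _ ≤ ENNReal.ofReal (c ^ p) := ENNReal.ofReal_le_ofReal hint
  calc (∫⁻ x, ‖g x‖ₑ ^ p ∂μ) ^ (1 / p) ≤ ENNReal.ofReal (c ^ p) ^ (1 / p) :=
        ENNReal.rpow_le_rpow hlint (by positivity)
    _ = ENNReal.ofReal c := by
        rw [ENNReal.ofReal_rpow_of_nonneg (by positivity) (by positivity), ← Real.rpow_mul hc,
          mul_one_div_cancel hp.ne', Real.rpow_one]

end Luxemburg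

theorem stmt11_general {α : Type*} [MeasurableSpace α] (μ : Measure α)
    [IsProbabilityMeasure μ]
    (p K : ℝ) (hp1 : 2 < p) (hK : 1 ≤ K)
    (Γ : ℝ → ℝ)
    (hΓ : ∀ t, Γ t = if |t| ≤ K then |t| ^ p
      else (1 + (p - 2) / 2) * K ^ (p - 2) * t ^ 2 - (p - 2) / 2 * K ^ p)
    (f : α → ℝ) (hmeas : Measurable f)
    (hnorm : sInf {lam : ℝ | 0 < lam ∧ ∫ x, Γ (f x / lam) ∂μ ≤ 1} = 1) :
    eLpNorm (fun x => if |f x / 2| < K then f x else 0) (ENNReal.ofReal p) μ ≤ 2 ∧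
    ∫ x, (if K ≤ |f x / 2| then f x else 0) ^ 2 ∂μ ≤ 4 * K ^ (2 - p) := by
  obtain rfl : Γ = gammaK p K := funext hΓ
  change sInf (luxemburgSet μ (gammaK p K) f) = 1 at hnorm
  have hK0 : 0 < K := one_pos.trans_le hK
  have hp0 : 0 < p := by linarith
  have hint_iff (a : ℝ) (ha : 0 < a) := integrable_gammaK_comp_div_iff (μ := μ) hp0 hK0 ha.ne'
    hmeas.aestronglyMeasurable
  obtain ⟨a, ha, hia⟩ := exists_integrable_comp_div_of_sInf_luxemburgSet_ne_zero
    (hnorm ▸ one_ne_zero)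
  have hint (b : ℝ) (hb : 0 < b) := (hint_iff b hb).2 ((hint_iff a ha).1 hia)
  have hne : (luxemburgSet μ (gammaK p K) f).Nonempty :=
    Set.nonempty_iff_ne_empty.mpr fun h => by simp [h] at hnorm
  have hle : ∫ x, gammaK p K (f x / 2) ∂μ ≤ 1 :=
    integral_comp_div_le_one_of_sInf_luxemburgSet_lt (fun _ _ => gammaK.mono hp0.le hK0) hint hne
      (by rw [hnorm]; norm_num)
  constructor
  · rw [← ENNReal.ofReal_ofNat 2]
    refine eLpNorm_ofReal_le_of_abs_rpow_le hp0 zero_le_two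
      (fun x => gammaK.abs_ite_rpow_le hp0 hK0 two_pos (f x)) ((hint 2 two_pos).const_mul _) ?_
    rw [integral_const_mul]
    exact mul_le_of_le_one_right (by positivity) hle
  · calc ∫ x, (if K ≤ |f x / 2| then f x else 0) ^ 2 ∂μ
        ≤ ∫ x, 2 ^ 2 * K ^ (2 - p) * gammaK p K (f x / 2) ∂μ :=
          integral_mono_of_nonneg (ae_of_all _ fun _ => sq_nonneg _)
            ((hint 2 two_pos).const_mul _)
            (ae_of_all _ fun x => gammaK.ite_sq_le hp1.le hK0 two_ne_zero (f x))
      _ = 2 ^ 2 * K ^ (2 - p) * ∫ x, gammaK p K (f x / 2) ∂μ := integral_const_mul _ _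
      _ ≤ 2 ^ 2 * K ^ (2 - p) := mul_le_of_le_one_right (by positivity) hle
      _ = 4 * K ^ (2 - p) := by norm_num

theorem stmt11 {α : Type*} [MeasurableSpace α] (μ : Measure α)
    [IsProbabilityMeasure μ]
    (p K : ℝ) (hp1 : 2 < p) (hp2 : p < 3) (hK : 1 ≤ K)
    (Γ : ℝ → ℝ)
    (hΓ : ∀ t, Γ t = if |t| ≤ K then |t| ^ p
      else (1 + (p - 2) / 2) * K ^ (p - 2) * t ^ 2 - (p - 2) / 2 * K ^ p)
    (f : α → ℝ) (hmeas : Measurable f)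
    (hnorm : sInf {lam : ℝ | 0 < lam ∧ ∫ x, Γ (f x / lam) ∂μ ≤ 1} = 1) :
    eLpNorm (fun x => if |f x / 2| < K then f x else 0) (ENNReal.ofReal p) μ ≤ 2 ∧
    ∫ x, (if K ≤ |f x / 2| then f x else 0) ^ 2 ∂μ ≤ 4 * K ^ (2 - p) :=
  stmt11_general μ p K hp1 hK Γ hΓ f hmeas hnorm
end

section
/- Let 1 ≤ m ≤ N, let S_m be a uniformly random m-element subset of [N], and let S̃ ⊆ [N] be formed by including each element of [N] independently with probability δ = m/N. Then for every family E of subsets of [N], P[S_m ∈ E] ≤ C·√m · P[S̃ ∈ E] for an absolute constant C (Pittel's inequality). -/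
/-!
Conditioned on its size being `m`, the Bernoulli set `S̃` is uniform on `m`-sets, so
`P[S_m ∈ E] ≤ P[S̃ ∈ E] / P[|S̃| = m]`. Since `m` is the mean of the binomial size `|S̃|`, the
Stirling bounds `√(2πn) (n/e)^n ≤ n! ≤ e √n (n/e)^n` give `P[|S̃| = m] ≥ √(2π) / (e² √m)`.
-/

open Real Stirling
open scoped Nat

theorem stirlingSeq_le_exp_one_div_sqrt_two {n : ℕ} (hn : n ≠ 0) :
    stirlingSeq n ≤ exp 1 / √2 := by
  obtain ⟨k, rfl⟩ := Nat.exists_eq_succ_of_ne_zero hn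
  simpa using stirlingSeq'_antitone (Nat.zero_le k)

theorem factorial_le_stirling {n : ℕ} (hn : n ≠ 0) :
    (n ! : ℝ) ≤ exp 1 * √n * (n / exp 1) ^ n := by
  have hpos : 0 < √(2 * n) * (n / exp 1) ^ n := by
    have : (0 : ℝ) < n := by positivity
    positivity
  have h := stirlingSeq_le_exp_one_div_sqrt_two hn
  rw [stirlingSeq, div_le_iff₀ hpos] at h
  calc (n ! : ℝ) ≤ exp 1 / √2 * (√(2 * n) * (n / exp 1) ^ n) := h
    _ = exp 1 * √n * (n / exp 1) ^ n := by
      rw [sqrt_mul zero_le_two]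
      field_simp

theorem sqrt_two_mul_pi_le_exp_one_sq : √(2 * π) ≤ exp 1 ^ 2 := by
  have he : (4 : ℝ) ≤ exp 1 ^ 2 := by nlinarith [add_one_le_exp 1]
  rw [sqrt_le_left (by positivity)]
  nlinarith [pi_lt_four]

theorem sqrt_two_mul_pi_mul_pow_le_choose (a b : ℕ) (ha : a ≠ 0) :
    √(2 * π) * ((a : ℝ) + b) ^ (a + b)
      ≤ exp 1 ^ 2 * √a * ((a + b).choose a * (a : ℝ) ^ a * (b : ℝ) ^ b) := by
  rcases eq_or_ne b 0 with rfl | hb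
  · have : (1 : ℝ) ≤ √a := one_le_sqrt.2 (by exact_mod_cast Nat.one_le_iff_ne_zero.2 ha)
    simp only [Nat.cast_zero, add_zero, Nat.choose_self, Nat.cast_one, pow_zero, one_mul, mul_one]
    gcongr
    calc √(2 * π) = √(2 * π) * 1 := (mul_one _).symm
      _ ≤ exp 1 ^ 2 * √a := by gcongr; exact sqrt_two_mul_pi_le_exp_one_sq
  have hchoose : ((a + b).choose a : ℝ) * a ! * b ! = (a + b)! := by
    rw [Nat.choose_symm_add]
    exact_mod_cast Nat.add_choose_mul_factorial_mul_factorial a b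
  have hstirling := le_factorial_stirling (a + b)
  push_cast at hstirling
  have hsqrt_b : 0 < √b := sqrt_pos.2 (by positivity)
  -- the factor `√b` of the upper bound for `b !` is absorbed by `√(a + b)` from the lower bound
  refine le_of_mul_le_mul_left ?_ hsqrt_b
  calc √b * (√(2 * π) * ((a : ℝ) + b) ^ (a + b))
      ≤ √(2 * π * (a + b)) * ((a : ℝ) + b) ^ (a + b) := by
        rw [sqrt_mul (by positivity : (0 : ℝ) ≤ 2 * π), ← mul_assoc, mul_comm (√b)]
        gcongr
        linarith [(Nat.cast_nonneg a : (0 : ℝ) ≤ a)]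
    _ = exp 1 ^ (a + b) * (√(2 * π * (a + b)) * (((a : ℝ) + b) / exp 1) ^ (a + b)) := by
        rw [div_pow]
        field_simp
    _ ≤ exp 1 ^ (a + b) * ((a + b).choose a * a ! * b !) := by
        rw [hchoose]
        gcongr
    _ ≤ exp 1 ^ (a + b) * ((a + b).choose a * (exp 1 * √a * (a / exp 1) ^ a)
          * (exp 1 * √b * (b / exp 1) ^ b)) := by
        gcongr
        · exact factorial_le_stirling ha
        · exact factorial_le_stirling hb
    _ = √b * (exp 1 ^ 2 * √a * ((a + b).choose a * (a : ℝ) ^ a * (b : ℝ) ^ b)) := by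
        rw [div_pow, div_pow, pow_add]
        field_simp

theorem inv_choose_le_sqrt_mul_binomial {N m : ℕ} (hm : m ≠ 0) (hmN : m ≤ N) :
    (N.choose m : ℝ)⁻¹
      ≤ exp 1 ^ 2 / √(2 * π) * √m * ((m / N : ℝ) ^ m * (1 - m / N) ^ (N - m)) := by
  obtain ⟨k, rfl⟩ := Nat.exists_eq_add_of_le hmN
  have hbound := sqrt_two_mul_pi_mul_pow_le_choose m k hm
  have hmk : (0 : ℝ) < m + k := by positivity
  have hchoose : (0 : ℝ) < (m + k).choose m := by exact_mod_cast Nat.choose_pos hmN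
  rw [Nat.add_sub_cancel_left, Nat.cast_add, one_sub_div hmk.ne', add_sub_cancel_left,
    div_pow, div_pow, inv_le_iff_one_le_mul₀' hchoose]
  field_simp
  rw [pow_add] at hbound
  linarith

theorem card_filter_mul_le_sum {ι : Type*} (s : Finset ι) (g : ι → ℕ) {f : ℕ → ℝ}
    (hf : ∀ n, 0 ≤ f n) (m : ℕ) :
    ((s.filter (g · = m)).card : ℝ) * f m ≤ ∑ i ∈ s, f (g i) :=
  calc ((s.filter (g · = m)).card : ℝ) * f m = ∑ i ∈ s.filter (g · = m), f (g i) := by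
        rw [Finset.sum_congr rfl fun i hi => by rw [(Finset.mem_filter.1 hi).2],
          Finset.sum_const, nsmul_eq_mul]
    _ ≤ ∑ i ∈ s, f (g i) :=
        Finset.sum_le_sum_of_subset_of_nonneg (Finset.filter_subset _ _) fun i _ _ => hf _

theorem stmt18 :
    ∃ C : ℝ, 0 < C ∧
      ∀ (N m : ℕ), 1 ≤ m → m ≤ N →
        ∀ E : Finset (Finset (Fin N)),
          ((E.filter fun S => S.card = m).card : ℝ) / (N.choose m)
            ≤ C * Real.sqrt m *
              ∑ S ∈ E, ((m : ℝ) / N) ^ S.card * (1 - (m : ℝ) / N) ^ (N - S.card) := by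
  refine ⟨exp 1 ^ 2 / √(2 * π), by positivity, fun N m hm hmN E => ?_⟩
  set p : ℝ := m / N
  have hp : 0 ≤ p ∧ p ≤ 1 :=
    ⟨by positivity, div_le_one_of_le₀ (by exact_mod_cast hmN) (by positivity)⟩
  set C := exp 1 ^ 2 / √(2 * π)
  calc ((E.filter fun S => S.card = m).card : ℝ) / (N.choose m)
      = (E.filter fun S => S.card = m).card * (N.choose m : ℝ)⁻¹ := div_eq_mul_inv _ _
    _ ≤ (E.filter fun S => S.card = m).card * (C * √m * (p ^ m * (1 - p) ^ (N - m))) := by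
        gcongr
        exact inv_choose_le_sqrt_mul_binomial (Nat.one_le_iff_ne_zero.1 hm) hmN
    _ = C * √m * ((E.filter fun S => S.card = m).card * (p ^ m * (1 - p) ^ (N - m))) := by ring
    _ ≤ C * √m * ∑ S ∈ E, p ^ S.card * (1 - p) ^ (N - S.card) := by
        gcongr
        exact card_filter_mul_le_sum E Finset.card
          (fun n => mul_nonneg (pow_nonneg hp.1 n) (pow_nonneg (sub_nonneg.2 hp.2) _)) m
end
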